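/- Let G be a graph of maximum degree at most Δ ≥ 2 and let λ ∈ ℝ with 0 ≤ λ ≤ (Δ-1)^{Δ-1}/Δ^Δ. Then Z(G)(-λ) > 0, i.e. the independence polynomial of G is strictly positive on the whole real interval [-(Δ-1)^{Δ-1}/Δ^Δ, (Δ-1)^{Δ-1}/Δ^Δ]. -/

import Mathlib

/-!
Write `Z_A` for the independence polynomial of the subgraph induced on a finite vertex set `A`,
fix `c ∈ [1/2, 1)` and `λ ≤ (1 - c) c^{Δ-1}`; the choice `c = 1 - 1/Δ` maximises this bound and
gives `(Δ-1)^{Δ-1}/Δ^Δ`. Deleting a vertex `v` gives `Z_A(-λ) = Z_{A-v}(-λ) - λ Z_{A-N[v]}(-λ)`.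
Induction on `A` shows that `Z_A(-λ) > 0`, and that `Z_A(-λ) > c Z_{A-v}(-λ)` whenever `v` has at
most `Δ - 1` neighbours in `A`. In the inductive step, every neighbour of `v` has `v` as a
neighbour outside `A - v`, so removing the `d` neighbours of `v` one at a time costs a factor
`c` each: `c^d Z_{A-N[v]} < Z_{A-v}`. As `λ ≤ c^Δ ≤ c^d`, and `λ ≤ (1 - c) c^d` when `d ≤ Δ - 1`,
the subtracted term is smaller than `Z_{A-v}`, respectively than `(1 - c) Z_{A-v}`.
-/

open Finset
open scoped Classical

/-- The (real) independence polynomial of `G` evaluated at `x`: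
`Z(G)(x) = ∑_{I independent} x^{|I|}` (the empty set included). -/
noncomputable def indepPolyR {V : Type} [Fintype V] (G : SimpleGraph V) (x : ℝ) : ℝ :=
  ∑ S : Finset V, if (∀ u ∈ S, ∀ v ∈ S, ¬ G.Adj u v) then x ^ S.card else 0

lemma pow_card_mul_apply_sdiff_lt {α : Type*} [DecidableEq α] {f : Finset α → ℝ} {c : ℝ}
    (hc : 0 < c) {B C : Finset α} (hf : ∀ A ⊆ B, ∀ a ∈ A, a ∈ C → c * f (A.erase a) < f A)
    (hCB : C ⊆ B) (hC : C.Nonempty) : c ^ #C * f (B \ C) < f B := by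
  induction hC using Nonempty.cons_induction with
  | singleton a =>
    have ha := mem_singleton_self a
    simpa [sdiff_singleton_eq_erase] using hf B subset_rfl a (hCB ha) ha
  | cons a C haC _ ih =>
    rw [cons_eq_insert] at hf hCB
    have hsub : C ⊆ B := (subset_insert a C).trans hCB
    have ha : a ∈ B \ C := mem_sdiff.2 ⟨hCB (mem_insert_self a C), haC⟩
    calc c ^ #(cons a C haC) * f (B \ cons a C haC)
        = c ^ #C * (c * f ((B \ C).erase a)) := by
          rw [card_cons, pow_succ, cons_eq_insert, sdiff_insert, mul_assoc]
      _ < c ^ #C * f (B \ C) :=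
          mul_lt_mul_of_pos_left (hf _ sdiff_subset a ha (mem_insert_self a C)) (pow_pos hc _)
      _ < f B := ih (fun A hA b hb hbC => hf A hA b hb (mem_insert_of_mem hbC)) hsub

namespace SimpleGraph

section

variable {V : Type*} (G : SimpleGraph V)

noncomputable def indepPolyOn (x : ℝ) (A : Finset V) : ℝ :=
  ∑ S ∈ A.powerset, if G.IsIndepSet (S : Set V) then x ^ #S else 0

@[simp]
lemma indepPolyOn_empty (x : ℝ) : G.indepPolyOn x ∅ = 1 := by
  simp [indepPolyOn]

lemma indepPolyOn_eq_add {v : V} [Fintype (G.neighborSet v)] {A : Finset V} (hv : v ∈ A)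
    (x : ℝ) :
    G.indepPolyOn x A =
      G.indepPolyOn x (A.erase v) + x * G.indepPolyOn x (A.erase v \ G.neighborFinset v) := by
  set B := A.erase v
  have hvB : v ∉ B := notMem_erase v A
  have hinsert : ∀ S ∈ B.powerset,
      (if G.IsIndepSet (insert v S : Finset V) then x ^ #(insert v S) else 0) =
        if S ⊆ B \ G.neighborFinset v then x * if G.IsIndepSet (S : Set V) then x ^ #S else 0
        else 0 := by
    intro S hS
    have hSB : S ⊆ B := mem_powerset.1 hS
    have hvS : v ∉ S := fun h => hvB (hSB h)
    have hiff : G.IsIndepSet (insert v S : Finset V) ↔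
        S ⊆ B \ G.neighborFinset v ∧ G.IsIndepSet (S : Set V) := by
      rw [isIndepSet_iff, coe_insert, Set.pairwise_insert_of_notMem (mem_coe.not.2 hvS), and_comm]
      simp only [subset_iff, mem_sdiff, mem_neighborFinset, mem_coe, G.adj_comm _ v, and_self]
      exact and_congr_left' ⟨fun h b hb => ⟨hSB hb, h b hb⟩, fun h b hb => (h hb).2⟩
    by_cases hSN : S ⊆ B \ G.neighborFinset v
    · rw [if_pos hSN, card_insert_of_notMem hvS, pow_succ']
      by_cases hS : G.IsIndepSet (S : Set V)
      · rw [if_pos (hiff.2 ⟨hSN, hS⟩), if_pos hS]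
      · rw [if_neg fun h => hS (hiff.1 h).2, if_neg hS, mul_zero]
    · rw [if_neg hSN, if_neg fun h => hSN (hiff.1 h).1]
  have hfilter : B.powerset.filter (· ⊆ B \ G.neighborFinset v) =
      (B \ G.neighborFinset v).powerset := by
    ext S
    simp only [mem_filter, mem_powerset, and_iff_right_iff_imp]
    exact fun h => h.trans sdiff_subset
  rw [indepPolyOn, ← insert_erase hv, sum_powerset_insert hvB, sum_congr rfl hinsert,
    ← sum_filter (· ⊆ B \ G.neighborFinset v), hfilter, ← mul_sum]
  rfl

variable [G.LocallyFinite] {Δ : ℕ} {c lam : ℝ}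

lemma card_neighborFinset_inter_le_sub_one {v a : V} {A : Finset V}
    (hdeg : G.degree a ≤ Δ) (hva : G.Adj v a) (hvA : v ∉ A) :
    #(G.neighborFinset a ∩ A) ≤ Δ - 1 := by
  have hsub : G.neighborFinset a ∩ A ⊆ (G.neighborFinset a).erase v := fun u hu =>
    mem_erase.2 ⟨fun h => hvA (h ▸ (mem_inter.1 hu).2), (mem_inter.1 hu).1⟩
  have hcard := card_le_card hsub
  rw [card_erase_of_mem ((G.mem_neighborFinset a v).2 hva.symm),
    card_neighborFinset_eq_degree] at hcard
  omega

lemma lt_indepPolyOn_of_forall_ssubset (hc : 0 < c) (hdeg : ∀ v, G.degree v ≤ Δ)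
    {A : Finset V} (ih : ∀ A' ⊂ A, 0 < G.indepPolyOn (-lam) A' ∧
      ∀ v ∈ A', #(G.neighborFinset v ∩ A') ≤ Δ - 1 →
        c * G.indepPolyOn (-lam) (A'.erase v) < G.indepPolyOn (-lam) A')
    {v : V} (hv : v ∈ A) {θ : ℝ} (hθ : 0 < θ) (hlamθ : lam < θ)
    (hlam : lam ≤ θ * c ^ #(G.neighborFinset v ∩ A)) :
    (1 - θ) * G.indepPolyOn (-lam) (A.erase v) < G.indepPolyOn (-lam) A := by
  rw [← erase_eq_of_notMem fun h => G.notMem_neighborFinset_self v (mem_inter.1 h).1,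
    ← inter_erase] at hlam
  set B := A.erase v
  set N := G.neighborFinset v ∩ B
  have hBA : B ⊂ A := erase_ssubset hv
  have hZB : 0 < G.indepPolyOn (-lam) B := (ih B hBA).1
  have hZBN : 0 < G.indepPolyOn (-lam) (B \ N) := (ih _ (sdiff_subset.trans_ssubset hBA)).1
  have hsmall : lam * G.indepPolyOn (-lam) (B \ N) < θ * G.indepPolyOn (-lam) B := by
    rcases N.eq_empty_or_nonempty with hNe | hNe
    · rw [hNe, sdiff_empty]
      exact mul_lt_mul_of_pos_right hlamθ hZB
    have hchain : c ^ #N * G.indepPolyOn (-lam) (B \ N) < G.indepPolyOn (-lam) B :=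
      pow_card_mul_apply_sdiff_lt hc (fun A' hA' a ha haN =>
        (ih A' (hA'.trans_ssubset hBA)).2 a ha <| G.card_neighborFinset_inter_le_sub_one
          (hdeg a) ((G.mem_neighborFinset v a).1 (mem_inter.1 haN).1)
          (fun h => notMem_erase v A (hA' h))) inter_subset_right hNe
    calc lam * G.indepPolyOn (-lam) (B \ N)
        ≤ θ * c ^ #N * G.indepPolyOn (-lam) (B \ N) := mul_le_mul_of_nonneg_right hlam hZBN.le
      _ < θ * G.indepPolyOn (-lam) B := by
          rw [mul_assoc]; exact mul_lt_mul_of_pos_left hchain hθ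
  rw [G.indepPolyOn_eq_add hv, ← sdiff_inter_self_right]
  linarith

theorem indepPolyOn_pos_and_lt (hΔ : 2 ≤ Δ) (hdeg : ∀ v, G.degree v ≤ Δ) (hc : 1 / 2 ≤ c)
    (hc1 : c < 1) (hlam : lam ≤ (1 - c) * c ^ (Δ - 1)) (A : Finset V) :
    0 < G.indepPolyOn (-lam) A ∧ ∀ v ∈ A, #(G.neighborFinset v ∩ A) ≤ Δ - 1 →
      c * G.indepPolyOn (-lam) (A.erase v) < G.indepPolyOn (-lam) A := by
  have hc0 : 0 < c := by linarith
  have hlam_lt : lam < 1 - c := by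
    have : c ^ (Δ - 1) < 1 := pow_lt_one₀ hc0.le hc1 (by omega)
    nlinarith
  have hlam_pow : lam ≤ c ^ Δ := by
    calc lam ≤ (1 - c) * c ^ (Δ - 1) := hlam
      _ ≤ c * c ^ (Δ - 1) := by gcongr; linarith
      _ = c ^ Δ := by rw [← pow_succ', Nat.sub_add_cancel (by omega)]
  induction A using Finset.strongInduction with
  | H A ih =>
    refine ⟨?_, fun v hv hd => ?_⟩
    · obtain rfl | ⟨v, hv⟩ := A.eq_empty_or_nonempty
      · simp
      have hd : #(G.neighborFinset v ∩ A) ≤ Δ := (card_le_card inter_subset_left).trans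
        ((G.card_neighborFinset_eq_degree v).trans_le (hdeg v))
      simpa using G.lt_indepPolyOn_of_forall_ssubset hc0 hdeg ih hv one_pos (by linarith)
        (by rw [one_mul]; exact hlam_pow.trans (pow_le_pow_of_le_one hc0.le hc1.le hd))
    · have hpow : c ^ (Δ - 1) ≤ c ^ #(G.neighborFinset v ∩ A) :=
        pow_le_pow_of_le_one hc0.le hc1.le hd
      simpa using G.lt_indepPolyOn_of_forall_ssubset hc0 hdeg ih hv (by linarith) hlam_lt
        (hlam.trans (mul_le_mul_of_nonneg_left hpow (by linarith)))

end

lemma indepPolyR_eq_indepPolyOn_univ {V : Type} [Fintype V] (G : SimpleGraph V) (x : ℝ) :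
    indepPolyR G x = G.indepPolyOn x univ := by
  rw [indepPolyR, indepPolyOn, powerset_univ]
  refine sum_congr rfl fun S _ => if_congr ?_ rfl rfl
  exact ⟨fun h u hu v hv _ => h u hu v hv, fun h u hu v hv =>
    if huv : u = v then huv ▸ G.irrefl else h hu hv huv⟩

end SimpleGraph

lemma sub_one_pow_sub_one_div_pow_self {n : ℕ} (hn : n ≠ 0) :
    ((n : ℝ) - 1) ^ (n - 1) / (n : ℝ) ^ n = (1 - (1 - 1 / n)) * (1 - 1 / n) ^ (n - 1) := by
  obtain ⟨m, rfl⟩ := Nat.exists_eq_add_one_of_ne_zero hn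
  have hm : (m : ℝ) + 1 ≠ 0 := by positivity
  rw [Nat.add_sub_cancel, Nat.cast_succ, sub_sub_cancel, one_sub_div hm, add_sub_cancel_right,
    div_pow, pow_succ]
  field_simp

theorem indepPoly_pos_on_interval_general
    {V : Type} [Fintype V] (G : SimpleGraph V) [DecidableRel G.Adj]
    (Δ : ℕ) (hΔ : 2 ≤ Δ) (hdeg : ∀ v : V, G.degree v ≤ Δ)
    (lam : ℝ)
    (hlam : lam ≤ ((Δ : ℝ) - 1) ^ (Δ - 1) / (Δ : ℝ) ^ Δ) :
    0 < indepPolyR G (-lam) := by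
  have hΔ' : (2 : ℝ) ≤ Δ := by exact_mod_cast hΔ
  rw [sub_one_pow_sub_one_div_pow_self (by omega)] at hlam
  rw [G.indepPolyR_eq_indepPolyOn_univ]
  refine (G.indepPolyOn_pos_and_lt hΔ hdeg ?_ ?_ hlam univ).1
  · have := one_div_le_one_div_of_le two_pos hΔ'
    linarith
  · have : (0 : ℝ) < 1 / Δ := by positivity
    linarith

/-- For a graph of maximum degree at most `Δ ≥ 2` and `0 ≤ λ ≤ (Δ-1)^{Δ-1}/Δ^Δ`,
the independence polynomial is strictly positive at `-λ`; hence it is strictly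
positive on the whole interval `[-(Δ-1)^{Δ-1}/Δ^Δ, (Δ-1)^{Δ-1}/Δ^Δ]`. -/
theorem indepPoly_pos_on_interval
    {V : Type} [Fintype V] (G : SimpleGraph V) [DecidableRel G.Adj]
    (Δ : ℕ) (hΔ : 2 ≤ Δ) (hdeg : ∀ v : V, G.degree v ≤ Δ)
    (lam : ℝ) (h0 : 0 ≤ lam)
    (hlam : lam ≤ ((Δ : ℝ) - 1) ^ (Δ - 1) / (Δ : ℝ) ^ Δ) :
    0 < indepPolyR G (-lam) :=
  indepPoly_pos_on_interval_general G Δ hΔ hdeg lam hlam
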